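/- Let λ = (λ_1,…,λ_n), μ = (μ_1,…,μ_n) ∈ P(m|n) and let 1 ≤ k ≤ n be such that λ_j = μ_j for all k ≤ j ≤ n. Then K^{-1}_{(λ_1,…,λ_n),(μ_1,…,μ_n)} = K^{-1}_{(λ_1,…,λ_k),(μ_1,…,μ_k)}, where (λ_1,…,λ_k) and (μ_1,…,μ_k) are partitions of m' = λ_1+…+λ_k in P(m'|k). In particular, K^{-1}_{λ,λ} = 1 for every partition λ. -/

import Mathlib

/-!
Comparing coefficients of `x^(μ+δ)` in `m_λ · a_δ = Σ_ν K⁻¹_{λ,ν} a_{ν+δ}` gives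
`K⁻¹_{λ,μ} = Σ sign σ` over the `σ ∈ Sₙ` for which `μ + δ - δ∘σ` is a rearrangement of `λ`:
for partitions `ν, μ` the exponents `ν + δ`, `μ + δ` are strictly increasing, so `x^(μ+δ)`
occurs in `a_{ν+δ}` only for `ν = μ`, with coefficient `1`. If `λₙ = μₙ`, the largest exponent
`μₙ + n - 1` can only arise as `λₙ + (n - 1)`, so `σ` fixes `n` and the rearrangement may be
chosen to fix `n` too; the signed sum is then the same sum for the truncations in `n - 1`
variables. Truncating down to `k` variables gives the first claim, down to `0` variables the
second.
-/

open Finset MvPolynomial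

/-- The `p`-th entry of an `n`-tuple, with default value `0` out of range. -/
def nth (n : ℕ) (f : Fin n → ℕ) (p : ℕ) : ℕ := if h : p < n then f ⟨p, h⟩ else 0

/-- `a_α = det (x_j ^ α_i)`. -/
noncomputable def aDet (n : ℕ) (α : Fin n → ℕ) : MvPolynomial (Fin n) ℤ :=
  (Matrix.of fun i j : Fin n => (X j : MvPolynomial (Fin n) ℤ) ^ α i).det

/-- `x ^ β = ∏ x_i ^ β_i`. -/
noncomputable def xpow (n : ℕ) (β : Fin n → ℕ) : MvPolynomial (Fin n) ℤ :=
  ∏ i, X i ^ β i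

/-- The monomial symmetric polynomial `m_lam(n) = Σ_{w ∈ Sₙ^lam} x^{w(lam)}`:
the sum of `x^β` over all distinct rearrangements `β` of `lam`. -/
noncomputable def msym (n : ℕ) (lam : Fin n → ℕ) : MvPolynomial (Fin n) ℤ :=
  ∑ β ∈ Finset.univ.image (fun σ : Equiv.Perm (Fin n) => lam ∘ σ), xpow n β

/-- `δ(n) = (0, 1, …, n-1)`. -/
def deltaN (n : ℕ) : Fin n → ℕ := fun i => (i : ℕ)

/-- `P(m∣n)`: partitions of `m` as nondecreasing `n`-tuples (zeros at the beginning). -/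
def Par (n m : ℕ) : Finset (Fin n → ℕ) :=
  (Fintype.piFinset fun _ : Fin n => Finset.range (m + 1)).filter
    fun μ => (∀ i j : Fin n, i ≤ j → μ i ≤ μ j) ∧ ∑ i, μ i = m

/-- `K` is the inverse Kostka matrix in `n` variables: for every weight `m` and
every `lam ∈ P(m∣n)`, `m_lam(n) · a_{δ(n)} = Σ_{μ ∈ P(m∣n)} K lam μ · a_{μ+δ(n)}`
(equivalently `m_lam(n) = Σ_μ K lam μ · s_μ(n)`). -/
def IsInvKostka (n : ℕ) (K : (Fin n → ℕ) → (Fin n → ℕ) → ℤ) : Prop :=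
  ∀ m : ℕ, ∀ lam ∈ Par n m,
    msym n lam * aDet n (deltaN n) =
      ∑ μ ∈ Par n m, C (K lam μ) * aDet n (fun i => μ i + (i : ℕ))


namespace Equiv.Perm

variable {n : ℕ}

def decomposeFinLast : Perm (Fin (n + 1)) ≃ Option (Fin n) × Perm (Fin n) :=
  (permCongr finSuccEquivLast).trans decomposeOption

@[simp]
theorem decomposeFinLast_symm_apply_last (o : Option (Fin n)) (σ : Perm (Fin n)) :
    decomposeFinLast.symm (o, σ) (Fin.last n) = finSuccEquivLast.symm o := by
  simp [decomposeFinLast, permCongr_apply]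

@[simp]
theorem decomposeFinLast_symm_none_apply_castSucc (σ : Perm (Fin n)) (i : Fin n) :
    decomposeFinLast.symm (none, σ) i.castSucc = (σ i).castSucc := by
  simp [decomposeFinLast, permCongr_apply]

@[simp]
theorem sign_decomposeFinLast_symm_none (σ : Perm (Fin n)) :
    sign (decomposeFinLast.symm (none, σ)) = sign σ := by
  simp [decomposeFinLast]

theorem exists_decomposeFinLast_symm_none {ρ : Perm (Fin (n + 1))}
    (hρ : ρ (Fin.last n) = Fin.last n) :
    ∃ σ, decomposeFinLast.symm (none, σ) = ρ := by
  refine ⟨(decomposeFinLast ρ).2, ?_⟩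
  conv_rhs => rw [← decomposeFinLast.symm_apply_apply ρ]
  congr
  simp [permCongr_apply, hρ]

theorem sum_eq_sum_decomposeFinLast_symm_none {M : Type*} [AddCommMonoid M]
    (f : Perm (Fin (n + 1)) → M) (hf : ∀ ρ, ρ (Fin.last n) ≠ Fin.last n → f ρ = 0) :
    ∑ ρ, f ρ = ∑ σ, f (decomposeFinLast.symm (none, σ)) := by
  rw [← decomposeFinLast.symm.sum_comp, Fintype.sum_prod_type, Fintype.sum_option,
    Fintype.sum_eq_zero _ fun i => Fintype.sum_eq_zero _ fun σ => hf _ ?_, add_zero]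
  simp [(Fin.castSucc_lt_last i).ne]

end Equiv.Perm

open Equiv Equiv.Perm

theorem coeff_xpow {n : ℕ} (β γ : Fin n → ℕ) :
    coeff (Finsupp.equivFunOnFinite.symm γ) (xpow n β) = if β = γ then 1 else 0 := by
  have hmon : xpow n β = monomial (Finsupp.equivFunOnFinite.symm β) 1 := by
    rw [monomial_eq, C_1, one_mul, Finsupp.prod_fintype _ _ fun _ => pow_zero _]
    rfl
  simp [hmon, coeff_monomial]

theorem xpow_add {n : ℕ} (β γ : Fin n → ℕ) : xpow n (β + γ) = xpow n β * xpow n γ := by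
  simp [xpow, pow_add, prod_mul_distrib]

theorem aDet_eq_sum {n : ℕ} (α : Fin n → ℕ) :
    aDet n α = ∑ σ : Perm (Fin n), (sign σ : ℤ) • xpow n (α ∘ σ) := by
  simp only [aDet, Matrix.det_apply, Units.smul_def]
  rfl

theorem coeff_aDet_of_strictMono {n : ℕ} {α γ : Fin n → ℕ} (hα : StrictMono α)
    (hγ : StrictMono γ) :
    coeff (Finsupp.equivFunOnFinite.symm γ) (aDet n α) = if α = γ then 1 else 0 := by
  have hperm : ∀ σ : Perm (Fin n), α ∘ σ = γ → σ = 1 ∧ α = γ := by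
    intro σ h
    have hαγ : α = γ :=
      (hα.range_inj hγ).mp (by rw [← h, Set.range_comp, σ.range_eq_univ, Set.image_univ])
    exact ⟨Equiv.ext fun i => hα.injective (congrFun (h.trans hαγ.symm) i), hαγ⟩
  rw [aDet_eq_sum, coeff_sum, Finset.sum_eq_single 1]
  · simp [coeff_xpow]
  · intro σ _ hσ
    rw [coeff_smul, coeff_xpow, if_neg fun h => hσ (hperm σ h).1, smul_zero]
  · simp

theorem coeff_msym_mul_aDet_deltaN {n : ℕ} (lam γ : Fin n → ℕ) :
    coeff (Finsupp.equivFunOnFinite.symm γ) (msym n lam * aDet n (deltaN n)) =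
      ∑ σ : Perm (Fin n),
        if ∃ τ : Perm (Fin n), lam ∘ τ + deltaN n ∘ σ = γ then (sign σ : ℤ) else 0 := by
  classical
  simp only [msym, aDet_eq_sum, sum_mul_sum, mul_smul_comm, ← xpow_add, coeff_sum, coeff_smul,
    coeff_xpow, smul_eq_mul, mul_ite, mul_one, mul_zero]
  rw [sum_comm]
  refine Fintype.sum_congr _ _ fun σ => ?_
  rw [← sum_image (g := (· + deltaN n ∘ σ)) (f := fun β => if β = γ then (sign σ : ℤ) else 0)
    (add_left_injective _).injOn, sum_ite_eq', image_image]
  simp [Function.comp_def]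

open Classical in
/-- The coefficient of `x^(μ+δ)` in `m_λ · a_δ`, see `coeff_msym_mul_aDet_deltaN`. -/
noncomputable def invKostkaSum (n : ℕ) (lam μ : Fin n → ℕ) : ℤ :=
  ∑ σ : Perm (Fin n),
    if ∃ τ : Perm (Fin n), lam ∘ τ + deltaN n ∘ σ = μ + deltaN n then (sign σ : ℤ) else 0

theorem monotone_of_mem_Par {n m : ℕ} {μ : Fin n → ℕ} (h : μ ∈ Par n m) : Monotone μ :=
  fun i j hij => (mem_filter.mp h).2.1 i j hij

theorem sum_of_mem_Par {n m : ℕ} {μ : Fin n → ℕ} (h : μ ∈ Par n m) : ∑ i, μ i = m :=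
  (mem_filter.mp h).2.2

theorem strictMono_add_deltaN {n : ℕ} {μ : Fin n → ℕ} (hμ : Monotone μ) :
    StrictMono (μ + deltaN n) :=
  hμ.add_strictMono fun _ _ h => h

theorem IsInvKostka.eq_invKostkaSum {n m : ℕ} {K : (Fin n → ℕ) → (Fin n → ℕ) → ℤ}
    (hK : IsInvKostka n K) {lam μ : Fin n → ℕ} (hlam : lam ∈ Par n m) (hμ : μ ∈ Par n m) :
    K lam μ = invKostkaSum n lam μ := by
  have hcoeff := congrArg (coeff (Finsupp.equivFunOnFinite.symm (μ + deltaN n))) (hK m lam hlam)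
  have hterm : ∀ ν ∈ Par n m,
      coeff (Finsupp.equivFunOnFinite.symm (μ + deltaN n))
        (C (K lam ν) * aDet n (fun i => ν i + (i : ℕ))) = if ν = μ then K lam ν else 0 := by
    intro ν hν
    rw [coeff_C_mul, show (fun i => ν i + (i : ℕ)) = ν + deltaN n from rfl,
      coeff_aDet_of_strictMono (strictMono_add_deltaN (monotone_of_mem_Par hν))
        (strictMono_add_deltaN (monotone_of_mem_Par hμ))]
    simp only [add_left_inj, mul_ite, mul_one, mul_zero]
  rw [coeff_msym_mul_aDet_deltaN, coeff_sum, sum_congr rfl hterm, sum_ite_eq', if_pos hμ]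
    at hcoeff
  exact hcoeff.symm

section LastEntry

variable {n : ℕ} {lam μ : Fin (n + 1) → ℕ}

/-- The last entry of `μ + δ` is its largest; it can only be `λ (last n) + n`. -/
theorem eq_last_of_add_deltaN (hlam : Monotone lam) (hlast : lam (Fin.last n) = μ (Fin.last n))
    {σ τ : Perm (Fin (n + 1))} (h : lam ∘ τ + deltaN (n + 1) ∘ σ = μ + deltaN (n + 1)) :
    σ (Fin.last n) = Fin.last n ∧ lam (τ (Fin.last n)) = lam (Fin.last n) := by
  have hentry := congrFun h (Fin.last n)
  have hlam_le := hlam (Fin.le_last (τ (Fin.last n)))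
  have hσ_le := Fin.is_le (σ (Fin.last n))
  simp only [Pi.add_apply, Function.comp_apply, deltaN, Fin.val_last] at hentry
  exact ⟨Fin.ext (by simp only [Fin.val_last]; omega), by omega⟩

theorem exists_add_deltaN_decomposeFinLast_iff (hlam : Monotone lam)
    (hlast : lam (Fin.last n) = μ (Fin.last n)) (σ : Perm (Fin n)) :
    (∃ τ : Perm (Fin (n + 1)),
        lam ∘ τ + deltaN (n + 1) ∘ decomposeFinLast.symm (none, σ) = μ + deltaN (n + 1)) ↔
      ∃ τ : Perm (Fin n),
        (lam ∘ Fin.castSucc) ∘ τ + deltaN n ∘ σ = μ ∘ Fin.castSucc + deltaN n := by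
  constructor
  · rintro ⟨τ, h⟩
    have hτ := (eq_last_of_add_deltaN hlam hlast h).2
    -- swapping `τ (last n)` with `last n` keeps `λ ∘ τ` and makes `τ` fix `last n`
    obtain ⟨τ', hτ'⟩ := exists_decomposeFinLast_symm_none
      (ρ := swap (τ (Fin.last n)) (Fin.last n) * τ) (swap_apply_left _ _)
    refine ⟨τ', funext fun i => ?_⟩
    have hentry := congrFun h i.castSucc
    have hρ := congrArg (fun ρ : Perm (Fin (n + 1)) => lam (ρ i.castSucc)) hτ'
    simp only [decomposeFinLast_symm_none_apply_castSucc, Perm.mul_apply,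
      apply_swap_eq_self hτ] at hρ
    simp only [Pi.add_apply, Function.comp_apply, deltaN,
      decomposeFinLast_symm_none_apply_castSucc, Fin.val_castSucc] at hentry ⊢
    rw [hρ, hentry]
  · rintro ⟨τ, h⟩
    refine ⟨decomposeFinLast.symm (none, τ), funext fun i => ?_⟩
    induction i using Fin.lastCases with
    | last => simp [deltaN, hlast]
    | cast i => simpa [deltaN] using congrFun h i

theorem invKostkaSum_succ (hlam : Monotone lam)
    (hlast : lam (Fin.last n) = μ (Fin.last n)) :
    invKostkaSum (n + 1) lam μ = invKostkaSum n (lam ∘ Fin.castSucc) (μ ∘ Fin.castSucc) := by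
  classical
  rw [invKostkaSum, sum_eq_sum_decomposeFinLast_symm_none]
  · simp only [exists_add_deltaN_decomposeFinLast_iff hlam hlast, sign_decomposeFinLast_symm_none]
    rfl
  · intro σ hσ
    rw [if_neg]
    rintro ⟨τ, h⟩
    exact hσ (eq_last_of_add_deltaN hlam hlast h).1

end LastEntry

theorem invKostkaSum_castLE {n k : ℕ} (hkn : k ≤ n) {lam μ : Fin n → ℕ} (hlam : Monotone lam)
    (htail : ∀ j : Fin n, k ≤ (j : ℕ) → lam j = μ j) :
    invKostkaSum n lam μ = invKostkaSum k (lam ∘ Fin.castLE hkn) (μ ∘ Fin.castLE hkn) := by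
  induction n, hkn using Nat.le_induction with
  | base => rfl
  | succ n hkn ih =>
    rw [invKostkaSum_succ hlam (htail _ (by simp; omega))]
    exact ih (hlam.comp (Fin.strictMono_castSucc.monotone)) fun j hj => htail _ hj

theorem invKostkaSum_self {n : ℕ} {lam : Fin n → ℕ} (hlam : Monotone lam) :
    invKostkaSum n lam lam = 1 := by
  rw [invKostkaSum_castLE (Nat.zero_le n) hlam fun _ _ => rfl]
  simp [invKostkaSum]

theorem sum_castLE_eq_sum_range_nth {n k : ℕ} (hkn : k ≤ n) (f : Fin n → ℕ) :
    ∑ i : Fin k, f (Fin.castLE hkn i) = ∑ p ∈ range k, nth n f p := by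
  rw [← Fin.sum_univ_eq_sum_range]
  refine Fintype.sum_congr _ _ fun i => ?_
  rw [nth, dif_pos (i.2.trans_le hkn)]
  rfl

theorem sum_castLE_eq_of_sum_eq {n k : ℕ} (hkn : k ≤ n) {f g : Fin n → ℕ}
    (hsum : ∑ i, f i = ∑ i, g i) (htail : ∀ j : Fin n, k ≤ (j : ℕ) → f j = g j) :
    ∑ i : Fin k, f (Fin.castLE hkn i) = ∑ i : Fin k, g (Fin.castLE hkn i) := by
  have htail_nth : ∑ p ∈ Ico k n, nth n f p = ∑ p ∈ Ico k n, nth n g p :=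
    sum_congr rfl fun p hp => by
      obtain ⟨hkp, hpn⟩ := mem_Ico.mp hp
      simp [nth, hpn, htail ⟨p, hpn⟩ hkp]
  have htotal : ∀ h : Fin n → ℕ, ∑ i, h i = ∑ p ∈ range n, nth n h p :=
    sum_castLE_eq_sum_range_nth le_rfl
  rw [htotal, htotal, ← sum_range_add_sum_Ico _ hkn, ← sum_range_add_sum_Ico _ hkn,
    htail_nth] at hsum
  rw [sum_castLE_eq_sum_range_nth, sum_castLE_eq_sum_range_nth]
  exact Nat.add_right_cancel hsum

theorem castLE_mem_Par {n m k : ℕ} (hkn : k ≤ n) {f : Fin n → ℕ} (hf : f ∈ Par n m) :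
    f ∘ Fin.castLE hkn ∈ Par k (∑ i, f (Fin.castLE hkn i)) := by
  refine mem_filter.mpr ⟨Fintype.mem_piFinset.mpr fun i => ?_, fun i j hij => ?_, rfl⟩
  · exact mem_range_succ_iff.mpr (single_le_sum (fun _ _ => Nat.zero_le _) (mem_univ i))
  · exact monotone_of_mem_Par hf ((Fin.castLE_le_castLE_iff hkn).mpr hij)

theorem stmt5_general (n m k : ℕ) (hkn : k ≤ n)
    (K : (Fin n → ℕ) → (Fin n → ℕ) → ℤ) (hK : IsInvKostka n K)
    (K' : (Fin k → ℕ) → (Fin k → ℕ) → ℤ) (hK' : IsInvKostka k K')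
    (lam μ : Fin n → ℕ) (hlam : lam ∈ Par n m) (hμ : μ ∈ Par n m)
    (heq : ∀ j : Fin n, k - 1 ≤ (j : ℕ) → lam j = μ j) :
    K lam μ = K' (fun i => lam (Fin.castLE hkn i)) (fun i => μ (Fin.castLE hkn i))
      ∧ ∀ ν ∈ Par n m, K ν ν = 1 := by
  refine ⟨?_, fun ν hν => ?_⟩
  · have htail : ∀ j : Fin n, k ≤ (j : ℕ) → lam j = μ j := fun j hj => heq j (by omega)
    have hμ' : μ ∘ Fin.castLE hkn ∈ Par k (∑ i, lam (Fin.castLE hkn i)) := by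
      rw [sum_castLE_eq_of_sum_eq hkn (by rw [sum_of_mem_Par hlam, sum_of_mem_Par hμ]) htail]
      exact castLE_mem_Par hkn hμ
    rw [hK.eq_invKostkaSum hlam hμ, invKostkaSum_castLE hkn (monotone_of_mem_Par hlam) htail]
    exact (hK'.eq_invKostkaSum (castLE_mem_Par hkn hlam) hμ').symm
  · rw [hK.eq_invKostkaSum hν hν, invKostkaSum_self (monotone_of_mem_Par hν)]

/-- Corollary 2 (1): if `λ_j = μ_j` for `k ≤ j ≤ n` then `K⁻¹_{λ,μ}` in `n` variables
equals `K⁻¹` of the truncations `(λ₁,…,λ_k)`, `(μ₁,…,μ_k)` in `k` variables.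
In particular `K⁻¹_{λ,λ} = 1`. -/
theorem stmt5 (n m k : ℕ) (hmn : m ≤ n) (hk1 : 1 ≤ k) (hkn : k ≤ n)
    (K : (Fin n → ℕ) → (Fin n → ℕ) → ℤ) (hK : IsInvKostka n K)
    (K' : (Fin k → ℕ) → (Fin k → ℕ) → ℤ) (hK' : IsInvKostka k K')
    (lam μ : Fin n → ℕ) (hlam : lam ∈ Par n m) (hμ : μ ∈ Par n m)
    (heq : ∀ j : Fin n, k - 1 ≤ (j : ℕ) → lam j = μ j) :
    K lam μ = K' (fun i => lam (Fin.castLE hkn i)) (fun i => μ (Fin.castLE hkn i))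
      ∧ ∀ ν ∈ Par n m, K ν ν = 1 :=
  stmt5_general n m k hkn K hK K' hK' lam μ hlam hμ heq
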